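/- arXiv:2510.12980 — 4 statements merged into one kernel-verified Lean document; each statement's English description precedes it below -/
import Mathlib

section
/- Let f: X → X be a continuous map of an infinite compact metric space. If f is topologically transitive and the set of periodic points of f is dense in X, then the set of periodic points is not all of X, i.e., there exists a non-periodic point. -/
/-!
If every point were periodic, Baire's theorem applied to the closed sets of points of period `n`
would give one, `ptsOfPeriod f N`, with nonempty interior. It is `f`-invariant, so transitivity
makes it dense, hence all of `X`: `f^[N] = id`. Then every orbit is finite, and a small
neighbourhood of a point `x` never meets a neighbourhood of a point `y` off the orbit of `x`,
contradicting transitivity.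
-/

open Function Set

/-- Unlike `MulAction.IsTopologicallyTransitive ℕ X`, this excludes the iterate `f^[0] = id`. -/
def IsTopologicallyTransitive {X : Type*} [TopologicalSpace X] (f : X → X) : Prop :=
  ∀ U V : Set X, IsOpen U → IsOpen V → U.Nonempty → V.Nonempty →
    ∃ n : ℕ, 0 < n ∧ (f^[n] '' U ∩ V).Nonempty

namespace IsTopologicallyTransitive

variable {X : Type*} [TopologicalSpace X] {f : X → X}

theorem eq_univ_of_mapsTo (h : IsTopologicallyTransitive f) {s : Set X} (hs : IsClosed s)
    (hint : (interior s).Nonempty) (hmaps : MapsTo f s s) : s = univ := by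
  by_contra hne
  obtain ⟨n, -, _, ⟨w, hw, rfl⟩, hout⟩ :=
    h _ _ isOpen_interior hs.isOpen_compl hint (nonempty_compl.mpr hne)
  exact hout (hmaps.iterate n (interior_subset hw))

theorem exists_forall_isPeriodicPt [T2Space X] [BaireSpace X] (h : IsTopologicallyTransitive f)
    (hf : Continuous f) (hper : ∀ x, x ∈ periodicPts f) :
    ∃ N > 0, ∀ x, IsPeriodicPt f N x := by
  rcases isEmpty_or_nonempty X with _ | _
  · exact ⟨1, one_pos, isEmptyElim⟩
  have hcover : ⋃ n : ℕ+, ptsOfPeriod f n = univ :=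
    iUnion_pnat_ptsOfPeriod f ▸ eq_univ_of_forall hper
  obtain ⟨N, hN⟩ := nonempty_interior_of_iUnion_of_closed
    (f := fun n : ℕ+ => ptsOfPeriod f n)
    (fun n => isClosed_fixedPoints (hf.iterate n)) hcover
  have hfull := h.eq_univ_of_mapsTo (isClosed_fixedPoints (hf.iterate N)) hN
    fun _ hx => IsPeriodicPt.apply hx
  exact ⟨N, N.pos, fun x => (eq_univ_iff_forall.mp hfull x : x ∈ ptsOfPeriod f N)⟩

theorem finite_of_forall_isPeriodicPt [T2Space X] (h : IsTopologicallyTransitive f)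
    (hf : Continuous f) {N : ℕ} (hN : 0 < N) (hper : ∀ x, IsPeriodicPt f N x) : Finite X := by
  rw [← not_infinite_iff_finite]
  intro hinf
  obtain ⟨x⟩ := Infinite.nonempty X
  set orbit := (f^[·] x) '' Iio N
  have horbit : orbit.Finite := (finite_Iio N).image _
  obtain ⟨y, hy⟩ := horbit.infinite_compl.nonempty
  obtain ⟨A, B, hA, hB, horbitA, hyB, hAB⟩ := SeparatedNhds.of_isCompact_isCompact
    horbit.isCompact isCompact_singleton (disjoint_singleton_right.mpr hy)
  -- points whose whole orbit stays in `A`; it suffices to look at the first `N` iterates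
  set U := ⋂ k ∈ Iio N, f^[k] ⁻¹' A
  have hU : IsOpen U := (finite_Iio N).isOpen_biInter fun k _ => hA.preimage (hf.iterate k)
  have hxU : x ∈ U := mem_iInter₂.mpr fun k hk => horbitA (mem_image_of_mem _ hk)
  obtain ⟨n, -, _, ⟨w, hw, rfl⟩, hwB⟩ := h U B hU hB ⟨x, hxU⟩ ⟨y, hyB rfl⟩
  have hwA : f^[n] w ∈ A := by
    rw [← (hper w).iterate_mod_apply n]
    exact mem_iInter₂.mp hw (n % N) (Nat.mod_lt n hN)
  exact hAB.ne_of_mem hwA hwB rfl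

end IsTopologicallyTransitive

theorem periodic_points_ne_univ_general
    {X : Type*} [MetricSpace X] [CompactSpace X] [Infinite X]
    (f : X → X) (hf : Continuous f)
    (htrans : ∀ U V : Set X, IsOpen U → IsOpen V → U.Nonempty → V.Nonempty →
      ∃ n : ℕ, 0 < n ∧ (f^[n] '' U ∩ V).Nonempty) :
    ∃ x : X, ¬ ∃ n : ℕ, 1 ≤ n ∧ f^[n] x = x := by
  by_contra! hall
  have htrans : IsTopologicallyTransitive f := htrans
  obtain ⟨N, hN, hper⟩ := htrans.exists_forall_isPeriodicPt hf fun x =>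
    let ⟨n, hn, hx⟩ := hall x
    mk_mem_periodicPts hn hx
  exact (htrans.finite_of_forall_isPeriodicPt hf hN hper).false

/-- A topologically transitive continuous map of an infinite compact metric
space with dense periodic points has a non-periodic point. -/
theorem periodic_points_ne_univ
    {X : Type*} [MetricSpace X] [CompactSpace X] [Infinite X]
    (f : X → X) (hf : Continuous f)
    (htrans : ∀ U V : Set X, IsOpen U → IsOpen V → U.Nonempty → V.Nonempty →
      ∃ n : ℕ, 0 < n ∧ (f^[n] '' U ∩ V).Nonempty)
    (hdense : Dense {x : X | ∃ n : ℕ, 1 ≤ n ∧ f^[n] x = x}) :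
    ∃ x : X, ¬ ∃ n : ℕ, 1 ≤ n ∧ f^[n] x = x :=
  periodic_points_ne_univ_general f hf htrans
end

section
/- Let f: X → X be a continuous map of an infinite compact metric space. If f is topologically transitive and the periodic points of f are dense in X, then f has sensitive dependence on initial conditions: there exists δ > 0 such that for every x ∈ X and every neighborhood U of x there exist y ∈ U and n ≥ 0 with d(f^n(x), f^n(y)) > δ. -/
/-!
Distinct periodic orbits are finite, hence positively separated, so every point `x` lies at
distance at least `4δ` from the whole orbit of some point `q`. Given a neighbourhood `U` of `x`,
pick a periodic point `p ∈ U` with `d(x, p) < δ`, of period `m`, and use transitivity to send some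
`z ∈ U` into the open set of points whose first `m + 1` iterates stay `δ`-close to those of `q`.
At a time `N` that is a multiple of `m`, `f^N p = p` while `f^N z` is `δ`-close to the orbit of
`q`; these two are more than `2δ` apart, so `f^N x` is more than `δ` away from one of them.
-/

open Function Set Metric

theorem Nat.exists_le_dvd_add {m : ℕ} (hm : 0 < m) (n : ℕ) : ∃ r ≤ m, m ∣ n + r :=
  ⟨m - n % m, Nat.sub_le _ _, ⟨n / m + 1, by
    have := Nat.mod_add_div n m
    have := Nat.mod_lt n hm
    rw [Nat.mul_succ]
    omega⟩⟩

namespace Function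

variable {α : Type*} {f : α → α} {x y : α}

theorem finite_range_iterate_of_mem_periodicPts (hx : x ∈ periodicPts f) :
    (range fun k => f^[k] x).Finite := by
  obtain ⟨n, hn, hxn⟩ := hx
  refine ((finite_Iio n).image fun k => f^[k] x).subset ?_
  rintro _ ⟨k, rfl⟩
  exact ⟨k % n, Nat.mod_lt k hn, hxn.iterate_mod_apply k⟩

theorem mem_range_iterate_of_iterate_mem (hy : y ∈ periodicPts f) {j : ℕ}
    (hj : f^[j] y ∈ range fun k => f^[k] x) : y ∈ range fun k => f^[k] x := by
  obtain ⟨n, hn, hyn⟩ := hy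
  obtain ⟨i, hi⟩ := hj
  refine ⟨n * j - j + i, ?_⟩
  dsimp only at hi ⊢
  rw [iterate_add_apply, hi, ← iterate_add_apply,
    Nat.sub_add_cancel (Nat.le_mul_of_pos_left j hn)]
  exact (hyn.mul_const j).eq

theorem disjoint_range_iterate_of_mem_periodicPts (hy : y ∈ periodicPts f)
    (hxy : y ∉ range fun k => f^[k] x) :
    Disjoint (range fun k => f^[k] x) (range fun k => f^[k] y) := by
  rw [Set.disjoint_right]
  rintro _ ⟨j, rfl⟩ hj
  exact hxy (mem_range_iterate_of_iterate_mem hy hj)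

end Function

section MetricSpace

variable {X : Type*}

theorem exists_pos_forall_le_dist_of_disjoint [PseudoMetricSpace X] {A B : Set X}
    (hA : IsCompact A) (hB : IsClosed B) (hAB : Disjoint A B) :
    ∃ δ > 0, ∀ a ∈ A, ∀ b ∈ B, δ ≤ dist a b := by
  obtain ⟨r, hr, h⟩ := exists_pos_forall_lt_edist hA hB hAB
  refine ⟨r, hr, fun a ha b hb => ?_⟩
  have := h a ha b hb
  rw [edist_dist] at this
  exact (ENNReal.coe_lt_ofReal.mp this).le

theorem forall_half_le_dist_or_forall_half_le_dist [PseudoMetricSpace X] {A B : Set X} {δ : ℝ}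
    (hAB : ∀ a ∈ A, ∀ b ∈ B, δ ≤ dist a b) (x : X) :
    (∀ a ∈ A, δ / 2 ≤ dist x a) ∨ ∀ b ∈ B, δ / 2 ≤ dist x b := by
  by_contra! h
  obtain ⟨⟨a, ha, hxa⟩, ⟨b, hb, hxb⟩⟩ := h
  linarith [hAB a ha b hb, dist_triangle_left a b x]

variable [MetricSpace X] {f : X → X}

theorem exists_pos_forall_exists_forall_le_dist_iterate [Infinite X]
    (hdense : Dense (periodicPts f)) : ∃ δ > 0, ∀ x, ∃ q, ∀ k, δ ≤ dist x (f^[k] q) := by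
  obtain ⟨q₁, hq₁⟩ := hdense.nonempty
  have hO₁ := finite_range_iterate_of_mem_periodicPts hq₁
  obtain ⟨q₂, hq₂, hq₂O₁⟩ :=
    hdense.exists_mem_open hO₁.isClosed.isOpen_compl hO₁.infinite_compl.nonempty
  obtain ⟨δ, hδ, hsep⟩ := exists_pos_forall_le_dist_of_disjoint hO₁.isCompact
    (finite_range_iterate_of_mem_periodicPts hq₂).isClosed
    (disjoint_range_iterate_of_mem_periodicPts hq₂ hq₂O₁)
  refine ⟨δ / 2, by positivity, fun x => ?_⟩
  rcases forall_half_le_dist_or_forall_half_le_dist hsep x with h | h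
  · exact ⟨q₁, fun k => h _ ⟨k, rfl⟩⟩
  · exact ⟨q₂, fun k => h _ ⟨k, rfl⟩⟩

theorem exists_lt_dist_iterate_of_forall_le_dist_iterate (hf : Continuous f)
    (htrans : ∀ U V : Set X, IsOpen U → IsOpen V → U.Nonempty → V.Nonempty →
      ∃ n : ℕ, (f^[n] '' U ∩ V).Nonempty)
    {δ : ℝ} {x p q : X} {U : Set X} (hU : IsOpen U) (hpU : p ∈ U) (hp : p ∈ periodicPts f)
    (hxp : dist x p < δ) (hq : ∀ k, 4 * δ ≤ dist x (f^[k] q)) :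
    ∃ y ∈ U, ∃ n, δ < dist (f^[n] x) (f^[n] y) := by
  obtain ⟨m, hm, hpm⟩ := hp
  set V := ⋂ i ∈ Finset.range (m + 1), f^[i] ⁻¹' ball (f^[i] q) δ
  have hV : IsOpen V := isOpen_biInter_finset fun i _ => isOpen_ball.preimage (hf.iterate i)
  have hqV : q ∈ V := mem_iInter₂.2 fun i _ => mem_ball_self (dist_nonneg.trans_lt hxp)
  obtain ⟨n, _, ⟨z, hzU, rfl⟩, hzV⟩ := htrans U V hU hV ⟨p, hpU⟩ ⟨q, hqV⟩
  obtain ⟨r, hrm, hmN⟩ := Nat.exists_le_dvd_add hm n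
  have hpN : f^[n + r] p = p := (hpm.trans_dvd hmN).eq
  have hzN : dist (f^[n + r] z) (f^[r] q) < δ := by
    rw [Nat.add_comm, iterate_add_apply]
    exact mem_iInter₂.1 hzV r (Finset.mem_range.2 (Nat.lt_succ_of_le hrm))
  by_contra! h
  have hxN := h p hpU (n + r)
  rw [hpN, dist_comm] at hxN
  have hzN' := h z hzU (n + r)
  linarith [hq r, dist_triangle4 x p (f^[n + r] x) (f^[r] q),
    dist_triangle (f^[n + r] x) (f^[n + r] z) (f^[r] q)]

end MetricSpace

theorem sensitive_dependence_general
    {X : Type*} [MetricSpace X] [Infinite X]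
    (f : X → X) (hf : Continuous f)
    (htrans : ∀ U V : Set X, IsOpen U → IsOpen V → U.Nonempty → V.Nonempty →
      ∃ n : ℕ, 0 < n ∧ (f^[n] '' U ∩ V).Nonempty)
    (hdense : Dense {x : X | ∃ n : ℕ, 1 ≤ n ∧ f^[n] x = x}) :
    ∃ δ : ℝ, 0 < δ ∧ ∀ x : X, ∀ U ∈ nhds x, ∃ y ∈ U, ∃ n : ℕ,
      δ < dist (f^[n] x) (f^[n] y) := by
  have hper : Dense (periodicPts f) := hdense
  obtain ⟨δ, hδ, hfar⟩ := exists_pos_forall_exists_forall_le_dist_iterate hper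
  refine ⟨δ / 4, by positivity, fun x U hU => ?_⟩
  obtain ⟨U', hU'U, hU', hxU'⟩ := _root_.mem_nhds_iff.1 hU
  obtain ⟨p, hp, hpU', hxp⟩ := hper.exists_mem_open (hU'.inter isOpen_ball)
    ⟨x, hxU', mem_ball_self (by positivity : 0 < δ / 4)⟩
  obtain ⟨q, hq⟩ := hfar x
  obtain ⟨y, hyU', hy⟩ := exists_lt_dist_iterate_of_forall_le_dist_iterate (δ := δ / 4) hf
    (fun U V hU hV hUne hVne => (htrans U V hU hV hUne hVne).imp fun _ => And.right)
    hU' hpU' hp (by rwa [dist_comm, ← mem_ball])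
    fun k => (by ring : 4 * (δ / 4) = δ).trans_le (hq k)
  exact ⟨y, hU'U hyU', hy⟩

/-- A topologically transitive continuous map of an infinite compact metric
space with dense periodic points has sensitive dependence on initial conditions. -/
theorem sensitive_dependence
    {X : Type*} [MetricSpace X] [CompactSpace X] [Infinite X]
    (f : X → X) (hf : Continuous f)
    (htrans : ∀ U V : Set X, IsOpen U → IsOpen V → U.Nonempty → V.Nonempty →
      ∃ n : ℕ, 0 < n ∧ (f^[n] '' U ∩ V).Nonempty)
    (hdense : Dense {x : X | ∃ n : ℕ, 1 ≤ n ∧ f^[n] x = x}) :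
    ∃ δ : ℝ, 0 < δ ∧ ∀ x : X, ∀ U ∈ nhds x, ∃ y ∈ U, ∃ n : ℕ,
      δ < dist (f^[n] x) (f^[n] y) :=
  sensitive_dependence_general f hf htrans hdense
end

section
/- Let f: X → X be a homeomorphism of a compact metric space. If f has a weak generator (a finite open cover β such that every bi-infinite intersection ⋂_{n∈ℤ} f^{-n}(B_n), B_n ∈ β, contains at most one point), then f is expansive; in fact any Lebesgue number δ of β is an expansivity constant. -/
theorem weak_generator_implies_expansive_general
    {X : Type*} [MetricSpace X]
    (f : Equiv.Perm X)
    {ι : Type*} (β : ι → Set X)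
    (hweak : ∀ B : ℤ → ι, (⋂ n : ℤ, (f ^ n : Equiv.Perm X) ⁻¹' (β (B n))).Subsingleton)
    (δ : ℝ)
    (hLeb : ∀ A : Set X, Metric.diam A < δ → ∃ i, A ⊆ β i) :
    ∀ x y : X, (∀ n : ℤ, dist ((f ^ n) x) ((f ^ n) y) < δ) → x = y := by
  intro x y h
  choose B hB using fun n : ℤ =>
    hLeb {(f ^ n) x, (f ^ n) y} (Metric.diam_pair.trans_lt (h n))
  exact hweak B (Set.mem_iInter.2 fun n => hB n (by simp))
    (Set.mem_iInter.2 fun n => hB n (by simp))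

/-- a homeomorphism of a compact metric space possessing a weak generator
(a finite open cover `β` all of whose bi-infinite intersections `⋂ₙ f^{-n}(Bₙ)` are at
most single points) is expansive; any Lebesgue number `δ` of `β` is an expansivity
constant: if `dist (fⁿ x) (fⁿ y) < δ` for all `n ∈ ℤ`, then `x = y`. -/
theorem weak_generator_implies_expansive
    {X : Type*} [MetricSpace X] [CompactSpace X]
    (f : Equiv.Perm X) (hf : Continuous f) (hf' : Continuous f.symm)
    {ι : Type*} [Finite ι] (β : ι → Set X)
    (hopen : ∀ i, IsOpen (β i)) (hcover : (⋃ i, β i) = Set.univ)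
    (hweak : ∀ B : ℤ → ι, (⋂ n : ℤ, (f ^ n : Equiv.Perm X) ⁻¹' (β (B n))).Subsingleton)
    (δ : ℝ) (hδ : 0 < δ)
    (hLeb : ∀ A : Set X, Metric.diam A < δ → ∃ i, A ⊆ β i) :
    ∀ x y : X, (∀ n : ℤ, dist ((f ^ n) x) ((f ^ n) y) < δ) → x = y :=
  weak_generator_implies_expansive_general f β hweak δ hLeb
end

section
/- Let X be a compact metric space, f: X → X a continuous surjective local homeomorphism. Then there exist λ, μ > 0 such that every subset D ⊆ X of diameter less than λ admits a decomposition f^{-1}(D) = D₁ ∪ ⋯ ∪ D_k where f maps each D_i homeomorphically onto D, and for i ≠ j every point of D_i is at distance at least 2μ from every point of D_j. -/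
/-!
By the Lebesgue number lemma for the cover of `X` by the sources of local inverses, `f` is
injective on every ball of some radius `δ > 0`; in particular distinct points of a fibre are at
least `δ` apart. By compactness `f` is also uniformly open: some `L > 0` has
`ball (f x) L ⊆ f '' ball x (δ / 4)` for every `x`. Given `D` of diameter `< L` and `y ∈ D`, the
pieces are `f⁻¹ D ∩ ball z (δ / 4)` for `z` in the finite fibre over `y`. Uniform openness shows
that they cover `f⁻¹ D` and are mapped onto `D`; injectivity on `δ`-balls shows that they are
mapped injectively (hence homeomorphically, `f` being open) and are `δ / 2` apart.
-/

open Metric Set Filter Topology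

section Topological

variable {X Y : Type*} [TopologicalSpace X] [TopologicalSpace Y] {f : X → Y}

theorem IsLocalHomeomorph.finite_preimage_singleton [CompactSpace X] [T1Space Y]
    (hf : IsLocalHomeomorph f) (y : Y) : (f ⁻¹' {y}).Finite :=
  (isClosed_singleton.preimage hf.continuous).isCompact.finite <|
    hf.isLocalHomeomorphOn.isDiscrete_of_image
      (subsingleton_singleton.anti (image_preimage_subset f {y})).isDiscrete

theorem Set.BijOn.exists_homeomorph_of_injOn_isOpen (hc : Continuous f) (ho : IsOpenMap f)
    {U S : Set X} {T : Set Y} (hU : IsOpen U) (hinj : InjOn f U) (hSU : S ⊆ U)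
    (hST : BijOn f S T) : ∃ h : S ≃ₜ T, ∀ a : S, (h a : Y) = f a := by
  have hU_emb : IsEmbedding (U.domRestrict f) :=
    (isOpenEmbedding_iff_continuous_injective_isOpenMap.mpr
      ⟨hc.comp continuous_subtype_val, hinj.injective, ho.domRestrict hU⟩).isEmbedding
  have hS_ind : IsInducing (hST.equiv f) :=
    (hU_emb.comp (IsEmbedding.inclusion hSU)).isInducing.codRestrict _
  exact ⟨(hST.equiv f).toHomeomorphOfIsInducing hS_ind, fun _ => rfl⟩

end Topological

section Metric

variable {X Y : Type*} [PseudoMetricSpace X] [PseudoMetricSpace Y] {f : X → Y}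

theorem IsLocalHomeomorph.exists_pos_forall_injOn_ball [CompactSpace X]
    (hf : IsLocalHomeomorph f) : ∃ δ > 0, ∀ x, InjOn f (ball x δ) := by
  choose e hxe hfe using hf
  obtain ⟨δ, hδ, hball⟩ := lebesgue_number_lemma_of_metric isCompact_univ
    (fun x => (e x).open_source) (fun x _ => mem_iUnion.mpr ⟨x, hxe x⟩)
  refine ⟨δ, hδ, fun x => ?_⟩
  obtain ⟨z, hz⟩ := hball x (mem_univ x)
  rw [hfe z]
  exact (e z).injOn.mono hz

theorem IsOpenMap.exists_pos_forall_ball_subset_image_ball [CompactSpace X]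
    (hc : Continuous f) (ho : IsOpenMap f) {r : ℝ} (hr : 0 < r) :
    ∃ L > 0, ∀ x, ball (f x) L ⊆ f '' ball x r := by
  suffices ∃ L > 0, ∀ x ∈ univ, ball (f x) L ⊆ f '' ball x r by simpa using this
  refine isCompact_univ.induction_on (p := fun s => ∃ L > 0, ∀ x ∈ s, ball (f x) L ⊆ f '' ball x r)
    ⟨1, one_pos, fun _ h => h.elim⟩
    (fun s t hst ⟨L, hL, ht⟩ => ⟨L, hL, fun x hx => ht x (hst hx)⟩)
    (fun s t ⟨L, hL, hs⟩ ⟨L', hL', ht⟩ => ⟨min L L', lt_min hL hL', fun x hx => ?_⟩)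
    (fun x _ => ?_)
  · rcases hx with hx | hx
    · exact (ball_subset_ball (min_le_left _ _)).trans (hs x hx)
    · exact (ball_subset_ball (min_le_right _ _)).trans (ht x hx)
  · obtain ⟨ρ, hρ, hρx⟩ := isOpen_iff.mp (ho _ isOpen_ball) (f x)
      (mem_image_of_mem f (mem_ball_self (half_pos hr)))
    refine ⟨ball x (r / 2) ∩ f ⁻¹' ball (f x) (ρ / 2),
      mem_nhdsWithin_of_mem_nhds (inter_mem (ball_mem_nhds x (half_pos hr))
        (hc.continuousAt.preimage_mem_nhds (ball_mem_nhds _ (half_pos hρ)))),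
      ρ / 2, half_pos hρ, fun x' hx' => ?_⟩
    calc ball (f x') (ρ / 2) ⊆ ball (f x) ρ := ball_subset_ball' (by
            have := mem_ball.mp hx'.2; linarith)
      _ ⊆ f '' ball x (r / 2) := hρx
      _ ⊆ f '' ball x' r := image_mono (ball_subset_ball' (by
            have := mem_ball'.mp hx'.1; linarith))

theorem two_mul_le_dist_of_mem_ball_of_ne {Z : Type*} {g : X → Z} {δ : ℝ}
    (hinj : ∀ x, InjOn g (ball x δ)) {z z' : X} (hzz' : g z = g z') (hne : z ≠ z')
    {a b : X} (ha : a ∈ ball z (δ / 4)) (hb : b ∈ ball z' (δ / 4)) :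
    2 * (δ / 4) ≤ dist a b := by
  have hδ : δ ≤ dist z z' := by
    by_contra! h
    exact hne (hinj z (mem_ball_self (dist_nonneg.trans_lt h)) (mem_ball'.mpr h) hzz')
  have := dist_triangle4 z a b z'
  linarith [mem_ball'.mp ha, mem_ball.mp hb]

theorem bijOn_preimage_inter_ball {δ L : ℝ} (hδ : 0 ≤ δ) (hinj : ∀ x, InjOn f (ball x δ))
    (hopen : ∀ x, ball (f x) L ⊆ f '' ball x (δ / 4)) {D : Set Y} (hDb : Bornology.IsBounded D)
    (hD : diam D < L) {z : X} (hz : f z ∈ D) : BijOn f (f ⁻¹' D ∩ ball z (δ / 4)) D := by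
  refine ⟨fun a ha => ha.1, (hinj z).mono (inter_subset_right.trans
    (ball_subset_ball (by linarith))), fun y hy => ?_⟩
  obtain ⟨w, hw, rfl⟩ := hopen z ((dist_le_diam_of_mem hDb hy hz).trans_lt hD)
  exact ⟨w, ⟨hy, hw⟩, rfl⟩

theorem preimage_eq_biUnion_preimage_inter_ball {r L : ℝ}
    (hopen : ∀ x, ball (f x) L ⊆ f '' ball x r) {D : Set Y} (hDb : Bornology.IsBounded D)
    (hD : diam D < L) {y : Y} (hy : y ∈ D) :
    f ⁻¹' D = ⋃ z ∈ f ⁻¹' {y}, f ⁻¹' D ∩ ball z r := by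
  refine subset_antisymm (fun a ha => ?_) (iUnion₂_subset fun _ _ => inter_subset_left)
  obtain ⟨z, hz, hfz⟩ := hopen a ((dist_le_diam_of_mem hDb hy ha).trans_lt hD)
  exact mem_iUnion₂.mpr ⟨z, hfz, ha, mem_ball_comm.mp hz⟩

theorem exists_even_covering_of_diam_lt (hc : Continuous f) (ho : IsOpenMap f)
    (hfin : ∀ y, (f ⁻¹' {y}).Finite) {δ L : ℝ} (hδ : 0 ≤ δ) (hinj : ∀ x, InjOn f (ball x δ))
    (hopen : ∀ x, ball (f x) L ⊆ f '' ball x (δ / 4)) {D : Set Y} (hDb : Bornology.IsBounded D)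
    (hD : diam D < L) :
    ∃ (k : ℕ) (Ds : Fin k → Set X),
      f ⁻¹' D = ⋃ i, Ds i ∧
      (∀ i, BijOn f (Ds i) D ∧ ∃ h : Ds i ≃ₜ D, ∀ a : Ds i, (h a : Y) = f a) ∧
      (∀ i j, i ≠ j → ∀ a ∈ Ds i, ∀ b ∈ Ds j, 2 * (δ / 4) ≤ dist a b) := by
  rcases D.eq_empty_or_nonempty with rfl | ⟨y, hy⟩
  · exact ⟨0, fun _ => ∅, by simp, fun i => i.elim0, fun i => i.elim0⟩
  have := (hfin y).to_subtype
  let e := (Finite.equivFin (f ⁻¹' {y})).symm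
  have hfe : ∀ i, f (e i) = y := fun i => (e i).2
  refine ⟨_, fun i => f ⁻¹' D ∩ ball (e i) (δ / 4), ?_, fun i => ?_, ?_⟩
  · refine ((preimage_eq_biUnion_preimage_inter_ball hopen hDb hD hy).trans
      (biUnion_eq_iUnion _ _)).trans ?_
    exact (e.surjective.iUnion_comp fun z => f ⁻¹' D ∩ ball z (δ / 4)).symm
  · have hbij := bijOn_preimage_inter_ball hδ hinj hopen hDb hD (z := e i) ((hfe i).symm ▸ hy)
    exact ⟨hbij, hbij.exists_homeomorph_of_injOn_isOpen hc ho isOpen_ball (hinj (e i))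
      (inter_subset_right.trans (ball_subset_ball (by linarith)))⟩
  · intro i j hij a ha b hb
    exact two_mul_le_dist_of_mem_ball_of_ne hinj ((hfe i).trans (hfe j).symm)
      (Subtype.coe_injective.ne (e.injective.ne hij)) ha.2 hb.2

end Metric

theorem eilenberg_even_covering_general
    {X : Type*} [MetricSpace X] [CompactSpace X]
    (f : X → X) (hloc : IsLocalHomeomorph f) :
    ∃ L : ℝ, 0 < L ∧ ∃ μ : ℝ, 0 < μ ∧
      ∀ D : Set X, Metric.diam D < L →
        ∃ (k : ℕ) (Ds : Fin k → Set X),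
          f ⁻¹' D = ⋃ i, Ds i ∧
          (∀ i, Set.BijOn f (Ds i) D ∧
            ∃ h : (Ds i) ≃ₜ D, ∀ a : Ds i, (h a : X) = f a) ∧
          (∀ i j, i ≠ j → ∀ a ∈ Ds i, ∀ b ∈ Ds j, 2 * μ ≤ dist a b) := by
  obtain ⟨δ, hδ, hinj⟩ := hloc.exists_pos_forall_injOn_ball
  obtain ⟨L, hL, hopen⟩ := hloc.isOpenMap.exists_pos_forall_ball_subset_image_ball
    hloc.continuous (r := δ / 4) (by positivity)
  exact ⟨L, hL, δ / 4, by positivity, fun D hD =>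
    exists_even_covering_of_diam_lt hloc.continuous hloc.isOpenMap
      hloc.finite_preimage_singleton hδ.le hinj hopen isBounded_of_compactSpace hD⟩

/-- Eilenberg: if `f` is a continuous surjective local homeomorphism of a
compact metric space `X`, then there exist `L, μ > 0` such that every set `D` of diameter
less than `L` has `f⁻¹(D) = D₁ ∪ ⋯ ∪ D_k`, where `f` maps each `Dᵢ` homeomorphically
onto `D`, and points of distinct pieces `Dᵢ`, `Dⱼ` are at distance at least `2μ`. -/
theorem eilenberg_even_covering
    {X : Type*} [MetricSpace X] [CompactSpace X]
    (f : X → X) (hsurj : Function.Surjective f) (hloc : IsLocalHomeomorph f) :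
    ∃ L : ℝ, 0 < L ∧ ∃ μ : ℝ, 0 < μ ∧
      ∀ D : Set X, Metric.diam D < L →
        ∃ (k : ℕ) (Ds : Fin k → Set X),
          f ⁻¹' D = ⋃ i, Ds i ∧
          (∀ i, Set.BijOn f (Ds i) D ∧
            ∃ h : (Ds i) ≃ₜ D, ∀ a : Ds i, (h a : X) = f a) ∧
          (∀ i j, i ≠ j → ∀ a ∈ Ds i, ∀ b ∈ Ds j, 2 * μ ≤ dist a b) :=
  eilenberg_even_covering_general f hloc
end
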